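/- arXiv:1912.03505 — 2 statements merged into one kernel-verified Lean document; each statement's English description precedes it below -/
import Mathlib

section
/- Let (X,e) be a complete L-ordered set and u an open filter of (X, σ_L(X)). Then for every x ∈ X, lim_S u(x) = e(x, ⊔(u^l)), where lim_S u(x) = ⨆_{I ideal of X} sub(I, u^l) ⊓ e(x, ⊔I). -/
variable {L : Type*} {X : Type*} {Y : Type*}

/-- `sub(A,B) = ⨅ x, A x ⇨ B x` for `L`-subsets `A B : X → L`. -/
def subL [Order.Frame L] (A B : X → L) : L := ⨅ x, A x ⇨ B x

/-- An `L`-valued topology on `X`: a family of `L`-subsets closed under binary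
pointwise infima, arbitrary pointwise suprema, containing all constants. -/
structure IsLTopology [Order.Frame L] (𝒪 : Set (X → L)) : Prop where
  inf_mem : ∀ A B : X → L, A ∈ 𝒪 → B ∈ 𝒪 → A ⊓ B ∈ 𝒪
  sSup_mem : ∀ S : Set (X → L), S ⊆ 𝒪 → sSup S ∈ 𝒪
  const_mem : ∀ a : L, (fun _ => a : X → L) ∈ 𝒪

/-- An open filter of `(X, 𝒪)`: a map `u : 𝒪 → L` with `u (A ⊓ B) = u A ⊓ u B`
and `u (a_X) ≥ a`. -/
structure LFilter [Order.Frame L] (𝒪 : Set (X → L)) where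
  toFun : ↥𝒪 → L
  map_inf : ∀ (A B : ↥𝒪) (h : (A : X → L) ⊓ (B : X → L) ∈ 𝒪),
    toFun ⟨(A : X → L) ⊓ (B : X → L), h⟩ = toFun A ⊓ toFun B
  const_le : ∀ (a : L) (h : (fun _ => a : X → L) ∈ 𝒪), a ≤ toFun ⟨fun _ => a, h⟩

/-- `φ(A)(u) = u(A)`. -/
def phiF [Order.Frame L] (𝒪 : Set (X → L)) (A : ↥𝒪) : LFilter 𝒪 → L := fun u => u.toFun A

/-- The `L`-valued topology on `Φ_L(X)` generated by the base `{φ(A) | A ∈ 𝒪}`: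
its members are exactly the suprema `⨆_j φ(A_j) ⊓ (a_j)_const`. -/
def filtOpens [Order.Frame L] (𝒪 : Set (X → L)) : Set (LFilter 𝒪 → L) :=
  { W | ∃ S : Set (↥𝒪 × L), W = fun u => ⨆ p ∈ S, u.toFun p.1 ⊓ p.2 }

/-- The pointed filter `[x](A) = A(x)`. -/
def ptFilter [Order.Frame L] (𝒪 : Set (X → L)) (x : X) : LFilter 𝒪 where
  toFun A := (A : X → L) x
  map_inf _ _ _ := rfl
  const_le _ _ := le_rfl

/-- The filter `[S](A) = sub(S, A)` for an `L`-subset `S`. -/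
def prFilter [Order.Frame L] (𝒪 : Set (X → L)) (S : X → L) : LFilter 𝒪 where
  toFun A := subL S (A : X → L)
  map_inf A B h := by
    simp only [subL, Pi.inf_apply, himp_inf_distrib]
    exact iInf_inf_eq
  const_le a h := le_iInf fun x => le_himp_iff.2 inf_le_left

/-- `Φ_L f` for a continuous map `f`. -/
def filtMap [Order.Frame L] (𝒪X : Set (X → L)) (𝒪Y : Set (Y → L)) (f : X → Y)
    (hf : ∀ B : ↥𝒪Y, (B : Y → L) ∘ f ∈ 𝒪X) (u : LFilter 𝒪X) : LFilter 𝒪Y where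
  toFun B := u.toFun ⟨(B : Y → L) ∘ f, hf B⟩
  map_inf A B h := u.map_inf ⟨(A : Y → L) ∘ f, hf A⟩ ⟨(B : Y → L) ∘ f, hf B⟩
    (hf ⟨(A : Y → L) ⊓ (B : Y → L), h⟩)
  const_le a h := u.const_le a (hf ⟨fun _ => a, h⟩)

lemma phi_mem [Order.Frame L] (𝒪 : Set (X → L)) (A : ↥𝒪) : phiF 𝒪 A ∈ filtOpens 𝒪 := by
  refine ⟨{(A, ⊤)}, ?_⟩
  funext u
  simp [phiF]

lemma LFilter.mono [Order.Frame L] {𝒪 : Set (X → L)} (u : LFilter 𝒪) (A B : ↥𝒪)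
    (hAB : (A : X → L) ≤ (B : X → L)) : u.toFun A ≤ u.toFun B := by
  have h : (A : X → L) ⊓ (B : X → L) ∈ 𝒪 := by
    rw [inf_eq_left.2 hAB]; exact A.2
  have h2 := u.map_inf A B h
  have h3 : (⟨(A : X → L) ⊓ (B : X → L), h⟩ : ↥𝒪) = A := Subtype.ext (inf_eq_left.2 hAB)
  rw [h3] at h2
  rw [h2]
  exact inf_le_right

lemma phi_inf [Order.Frame L] (𝒪 : Set (X → L)) (A B : ↥𝒪)
    (h : (A : X → L) ⊓ (B : X → L) ∈ 𝒪) :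
    phiF 𝒪 ⟨(A : X → L) ⊓ (B : X → L), h⟩ = phiF 𝒪 A ⊓ phiF 𝒪 B := by
  funext u
  exact u.map_inf A B h

lemma const_mem_filtOpens [Order.Frame L] (𝒪 : Set (X → L)) (a : L)
    (h : (fun _ => a : X → L) ∈ 𝒪) :
    (fun _ => a : LFilter 𝒪 → L) ∈ filtOpens 𝒪 := by
  refine ⟨{(⟨fun _ => a, h⟩, a)}, ?_⟩
  funext u
  simp only [Set.mem_singleton_iff, iSup_iSup_eq_left]
  exact (inf_eq_right.2 (u.const_le a h)).symm

/-- `μ_X(α)(A) = α(φ(A))`. -/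
def muF [Order.Frame L] (𝒪 : Set (X → L)) (α : LFilter (filtOpens 𝒪)) : LFilter 𝒪 where
  toFun A := α.toFun ⟨phiF 𝒪 A, phi_mem 𝒪 A⟩
  map_inf A B h := by
    have h' : phiF 𝒪 A ⊓ phiF 𝒪 B ∈ filtOpens 𝒪 := phi_inf 𝒪 A B h ▸ phi_mem 𝒪 ⟨_, h⟩
    have h2 := α.map_inf ⟨phiF 𝒪 A, phi_mem 𝒪 A⟩ ⟨phiF 𝒪 B, phi_mem 𝒪 B⟩ h'
    have h3 : (⟨phiF 𝒪 ⟨(A : X → L) ⊓ (B : X → L), h⟩, phi_mem 𝒪 ⟨_, h⟩⟩ :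
        ↥(filtOpens 𝒪)) = ⟨phiF 𝒪 A ⊓ phiF 𝒪 B, h'⟩ := Subtype.ext (phi_inf 𝒪 A B h)
    show α.toFun ⟨phiF 𝒪 ⟨(A : X → L) ⊓ (B : X → L), h⟩, phi_mem 𝒪 ⟨_, h⟩⟩ =
      α.toFun ⟨phiF 𝒪 A, phi_mem 𝒪 A⟩ ⊓ α.toFun ⟨phiF 𝒪 B, phi_mem 𝒪 B⟩
    rw [h3]
    exact h2
  const_le a h := by
    have h1 : (fun _ => a : LFilter 𝒪 → L) ∈ filtOpens 𝒪 := const_mem_filtOpens 𝒪 a h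
    have h2 : (fun _ => a : LFilter 𝒪 → L) ≤ phiF 𝒪 ⟨fun _ => a, h⟩ :=
      fun u => u.const_le a h
    exact le_trans (α.const_le a h1) (α.mono ⟨_, h1⟩ ⟨_, phi_mem 𝒪 ⟨_, h⟩⟩ h2)

lemma filtMap_continuous [Order.Frame L] (𝒪X : Set (X → L)) (𝒪Y : Set (Y → L)) (f : X → Y)
    (hf : ∀ B : ↥𝒪Y, (B : Y → L) ∘ f ∈ 𝒪X) :
    ∀ W ∈ filtOpens 𝒪Y, (W ∘ filtMap 𝒪X 𝒪Y f hf) ∈ filtOpens 𝒪X := by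
  rintro W ⟨S, rfl⟩
  refine ⟨(fun p : ↥𝒪Y × L => ((⟨(p.1 : Y → L) ∘ f, hf p.1⟩ : ↥𝒪X), p.2)) '' S, ?_⟩
  funext u
  rw [iSup_image]
  rfl

lemma muF_continuous [Order.Frame L] (𝒪 : Set (X → L)) :
    ∀ W ∈ filtOpens 𝒪, (W ∘ muF 𝒪) ∈ filtOpens (filtOpens 𝒪) := by
  rintro W ⟨S, rfl⟩
  refine ⟨(fun p : ↥𝒪 × L =>
    ((⟨phiF 𝒪 p.1, phi_mem 𝒪 p.1⟩ : ↥(filtOpens 𝒪)), p.2)) '' S, ?_⟩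
  funext α
  rw [iSup_image]
  rfl

lemma ptFilter_continuous [Order.Frame L] (𝒪 : Set (X → L)) (h𝒪 : IsLTopology 𝒪) :
    ∀ W ∈ filtOpens 𝒪, (W ∘ ptFilter 𝒪) ∈ 𝒪 := by
  rintro W ⟨S, rfl⟩
  have key : ((fun u : LFilter 𝒪 => ⨆ p ∈ S, u.toFun p.1 ⊓ p.2) ∘ ptFilter 𝒪) =
      sSup ((fun p : ↥𝒪 × L => (p.1 : X → L) ⊓ fun _ => p.2) '' S) := by
    funext x
    rw [sSup_image', iSup_apply]
    exact (iSup_subtype'' S fun p : ↥𝒪 × L =>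
      ((p.1 : X → L) ⊓ fun _ => p.2 : X → L) x).symm
  rw [key]
  apply h𝒪.sSup_mem
  rintro g ⟨p, _, rfl⟩
  exact h𝒪.inf_mem _ _ p.1.2 (h𝒪.const_mem p.2)

/-- An `L`-order as a binary `L`-relation with the order axioms. -/
structure IsLOrder [Order.Frame L] (e : X → X → L) : Prop where
  refl : ∀ x, e x x = ⊤
  trans : ∀ x y z, e x y ⊓ e y z ≤ e x z
  antisymm : ∀ x y, e x y = ⊤ → e y x = ⊤ → x = y

/-- `s` is a supremum of the `L`-subset `A`. -/
def IsSupE [Order.Frame L] (e : X → X → L) (A : X → L) (s : X) : Prop :=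
  ∀ y, e s y = ⨅ z, A z ⇨ e z y

/-- `i` is an infimum of the `L`-subset `A`. -/
def IsInfE [Order.Frame L] (e : X → X → L) (A : X → L) (i : X) : Prop :=
  ∀ y, e y i = ⨅ z, A z ⇨ e y z

/-- Completeness: every `L`-subset has a supremum. -/
def CompleteE [Order.Frame L] (e : X → X → L) : Prop := ∀ A : X → L, ∃ s, IsSupE e A s

/-- Directedness of an `L`-subset. -/
def DirectedE [Order.Frame L] (e : X → X → L) (D : X → L) : Prop :=
  (⨆ x, D x) = ⊤ ∧ ∀ x y, D x ⊓ D y ≤ ⨆ z, D z ⊓ e x z ⊓ e y z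

/-- An ideal: a directed lower set. -/
def IsIdealE [Order.Frame L] (e : X → X → L) (I : X → L) : Prop :=
  DirectedE e I ∧ ∀ x y, I x ⊓ e y x ≤ I y

/-- `↑x(y) = e(x,y)`. -/
def upE [Order.Frame L] (e : X → X → L) (x : X) : X → L := fun y => e x y

/-- `⇓x(y) = ⨅_{I ideal} (e(x, ⊔I) ⇨ I(y))`. -/
def wbelowE [Order.Frame L] (e : X → X → L) (x y : X) : L :=
  ⨅ I : X → L, ⨅ _ : IsIdealE e I, ⨅ s : X, ⨅ _ : IsSupE e I s, e x s ⇨ I y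

/-- Scott open `L`-subsets. -/
def ScottOpenE [Order.Frame L] (e : X → X → L) (A : X → L) : Prop :=
  (∀ x y, A x ⊓ e x y ≤ A y) ∧
  ∀ D : X → L, DirectedE e D → ∀ s, IsSupE e D s → A s ≤ ⨆ x, A x ⊓ D x

/-- The `L`-Scott topology. -/
def scottOpens [Order.Frame L] (e : X → X → L) : Set (X → L) := { A | ScottOpenE e A }

/-- `u^l(x) = ⨆_{A ∈ σ_L(X)} u(A) ⊓ sub(A, ↑x)`. -/
def lowerOf [Order.Frame L] (e : X → X → L) (u : LFilter (scottOpens e)) : X → L :=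
  fun x => ⨆ A : ↥(scottOpens e), u.toFun A ⊓ subL (A : X → L) (upE e x)

/-- The specialization `L`-order `e(x,y) = ⨅_{A ∈ 𝒪} (A x ⇨ A y)`. -/
def specE [Order.Frame L] (𝒪 : Set (X → L)) (x y : X) : L :=
  ⨅ A : ↥𝒪, (A : X → L) x ⇨ (A : X → L) y

/-- `sub(u,v) = ⨅_{A ∈ 𝒪} (u A ⇨ v A)` for open filters. -/
def subF [Order.Frame L] {𝒪 : Set (X → L)} (u v : LFilter 𝒪) : L :=
  ⨅ A : ↥𝒪, u.toFun A ⇨ v.toFun A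

/-! The supremum defining `lim_S u (x)` is attained at the ideal `I = u^l` itself, where
`sub(I, u^l) = 1`; for any other ideal `I`, `sub(I, u^l) ≤ e(⊔I, ⊔u^l)` and transitivity of `e`
give the bound. Directedness of `u^l` comes from closing Scott open sets under `⊓`: for open `A`,
`B` the infimum `z` of `A ⊓ B` (in a complete `L`-order, the supremum of its lower bounds)
satisfies `sub(A, ↑x) ≤ e(x, z)`, `sub(B, ↑y) ≤ e(y, z)` and `u(A) ⊓ u(B) = u(A ⊓ B) ≤ u^l(z)`. -/

section
variable [Order.Frame L] {e : X → X → L}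

lemma subL_inf_le (A B : X → L) (z : X) : subL A B ⊓ A z ≤ B z :=
  (inf_le_inf_right _ (iInf_le _ z)).trans himp_inf_le

lemma subL_mono {A A' B B' : X → L} (hA : A' ≤ A) (hB : B ≤ B') : subL A B ≤ subL A' B' :=
  iInf_mono fun z => himp_le_himp (hA z) (hB z)

lemma subL_self (A : X → L) : subL A A = ⊤ := by
  simp [subL]

lemma IsSupE.le (hord : IsLOrder e) {A : X → L} {s : X} (hs : IsSupE e A s) (z : X) :
    A z ≤ e z s := by
  have h := hs s
  rw [hord.refl s] at h
  exact himp_eq_top_iff.1 (top_unique (h.le.trans (iInf_le _ z)))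

lemma IsSupE.subL_le {A B : X → L} {s y : X} (hs : IsSupE e A s) (hB : ∀ z, B z ≤ e z y) :
    subL A B ≤ e s y :=
  (hs y).ge.trans' (iInf_mono fun z => himp_le_himp_left (hB z))

lemma IsLOrder.subL_upE_inf_le (hord : IsLOrder e) (A : X → L) (x y : X) :
    subL A (upE e x) ⊓ e y x ≤ subL A (upE e y) :=
  le_iInf fun z => le_himp_iff.2 <| calc
    subL A (upE e x) ⊓ e y x ⊓ A z ≤ e y x ⊓ e x z :=
        le_inf (inf_le_left.trans inf_le_right)
          ((inf_le_inf_right _ inf_le_left).trans (subL_inf_le A _ z))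
    _ ≤ e y z := hord.trans y x z

lemma isInfE_of_isSupE_lowerBounds (hord : IsLOrder e) {C : X → L} {i : X}
    (hi : IsSupE e (fun x => subL C (upE e x)) i) : IsInfE e C i := by
  intro x
  refine le_antisymm (le_iInf fun w => le_himp_iff.2 ?_) (hi.le hord x)
  have hCw : C w ≤ e i w := by
    rw [hi w]
    exact le_iInf fun y => le_himp_iff.2 <| (inf_comm _ _).le.trans (subL_inf_le C _ w)
  exact (inf_le_inf_left _ hCw).trans (hord.trans x i w)

lemma CompleteE.exists_isInfE (hord : IsLOrder e) (hc : CompleteE e) (C : X → L) :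
    ∃ i, IsInfE e C i :=
  (hc _).imp fun _ => isInfE_of_isSupE_lowerBounds hord

lemma CompleteE.exists_forall_eq_top (hc : CompleteE e) : ∃ b : X, ∀ y, e b y = ⊤ :=
  (hc fun _ => ⊥).imp fun b hb y => by simp [hb y]

lemma scottOpenE_const (a : L) : ScottOpenE e fun _ => a := by
  refine ⟨fun _ _ => inf_le_left, fun D hD _ _ => ?_⟩
  rw [← inf_iSup_eq, hD.1, inf_top_eq]

lemma ScottOpenE.inf {A B : X → L} (hA : ScottOpenE e A) (hB : ScottOpenE e B) :
    ScottOpenE e (A ⊓ B) := by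
  refine ⟨fun x y => le_inf ?_ ?_, fun D hD s hs => ?_⟩
  · exact (inf_le_inf_right _ inf_le_left).trans (hA.1 x y)
  · exact (inf_le_inf_right _ inf_le_right).trans (hB.1 x y)
  calc (A ⊓ B) s ≤ (⨆ x, A x ⊓ D x) ⊓ ⨆ y, B y ⊓ D y :=
        inf_le_inf (hA.2 D hD s hs) (hB.2 D hD s hs)
    _ = ⨆ x, ⨆ y, (A x ⊓ B y) ⊓ (D x ⊓ D y) := by
        simp only [iSup_inf_eq, inf_iSup_eq, inf_inf_inf_comm]
        exact iSup_comm
    _ ≤ ⨆ z, (A ⊓ B) z ⊓ D z := iSup₂_le fun x y => ?_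
  calc A x ⊓ B y ⊓ (D x ⊓ D y) ≤ A x ⊓ B y ⊓ ⨆ z, D z ⊓ e x z ⊓ e y z :=
        inf_le_inf_left _ (hD.2 x y)
    _ = ⨆ z, (A x ⊓ e x z) ⊓ (B y ⊓ e y z) ⊓ D z := by
        rw [inf_iSup_eq]
        exact iSup_congr fun z => by ac_rfl
    _ ≤ ⨆ z, (A ⊓ B) z ⊓ D z :=
        iSup_mono fun z => inf_le_inf_right _ (inf_le_inf (hA.1 x z) (hB.1 y z))

variable (u : LFilter (scottOpens e))

lemma le_lowerOf (A : ↥(scottOpens e)) (x : X) :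
    u.toFun A ⊓ subL (A : X → L) (upE e x) ≤ lowerOf e u x :=
  le_iSup (fun A : ↥(scottOpens e) => u.toFun A ⊓ subL (A : X → L) (upE e x)) A

lemma lowerOf_inf_le (hord : IsLOrder e) (x y : X) : lowerOf e u x ⊓ e y x ≤ lowerOf e u y := by
  rw [lowerOf, iSup_inf_eq]
  exact iSup_mono fun A => (inf_assoc _ _ _).le.trans
    (inf_le_inf_left _ (hord.subL_upE_inf_le A x y))

lemma iSup_lowerOf_eq_top (hc : CompleteE e) : ⨆ x, lowerOf e u x = ⊤ := by
  obtain ⟨b, hb⟩ := hc.exists_forall_eq_top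
  have htop : (fun _ => ⊤ : X → L) ∈ scottOpens e := scottOpenE_const ⊤
  have hsub : subL (fun _ => ⊤ : X → L) (upE e b) = ⊤ := by simp [subL, upE, hb]
  exact top_unique <| le_iSup_of_le b <|
    (le_inf (u.const_le ⊤ htop) hsub.ge).trans (le_lowerOf u ⟨_, htop⟩ b)

lemma lowerOf_inf_lowerOf_le (hord : IsLOrder e) (hc : CompleteE e) (x y : X) :
    lowerOf e u x ⊓ lowerOf e u y ≤ ⨆ z, lowerOf e u z ⊓ e x z ⊓ e y z := by
  calc lowerOf e u x ⊓ lowerOf e u y = ⨆ A : ↥(scottOpens e), ⨆ B : ↥(scottOpens e),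
        (u.toFun A ⊓ subL (A : X → L) (upE e x)) ⊓ (u.toFun B ⊓ subL (B : X → L) (upE e y)) := by
        simp only [lowerOf, iSup_inf_eq, inf_iSup_eq]
        exact iSup_comm
    _ ≤ _ := iSup₂_le fun A B => ?_
  have hC : (A : X → L) ⊓ B ∈ scottOpens e := ScottOpenE.inf A.2 B.2
  obtain ⟨z, hz⟩ := hc.exists_isInfE hord ((A : X → L) ⊓ B)
  have hxz : subL (A : X → L) (upE e x) ≤ e x z := (hz x).ge.trans' (subL_mono inf_le_left le_rfl)
  have hyz : subL (B : X → L) (upE e y) ≤ e y z := (hz y).ge.trans' (subL_mono inf_le_right le_rfl)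
  have huz : u.toFun A ⊓ u.toFun B ≤ lowerOf e u z := by
    rw [← u.map_inf A B hC]
    refine (le_inf le_rfl ?_).trans (le_lowerOf u ⟨_, hC⟩ z)
    exact le_top.trans ((hord.refl z).symm.trans (hz z)).le
  refine le_iSup_of_le z (le_inf (le_inf ?_ ?_) ?_)
  · exact (inf_inf_inf_comm _ _ _ _).le.trans (inf_le_left.trans huz)
  · exact inf_le_left.trans (inf_le_right.trans hxz)
  · exact inf_le_right.trans (inf_le_right.trans hyz)

lemma isIdealE_lowerOf (hord : IsLOrder e) (hc : CompleteE e) : IsIdealE e (lowerOf e u) :=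
  ⟨⟨iSup_lowerOf_eq_top u hc, lowerOf_inf_lowerOf_le u hord hc⟩, lowerOf_inf_le u hord⟩

end

/-- For a complete `L`-ordered set `(X, e)` and an open filter `u` of the
`L`-Scott topology, `lim_S u (x) = e(x, ⊔(u^l))`, where
`lim_S u (x) = ⨆_{I ideal} sub(I, u^l) ⊓ e(x, ⊔I)`. -/
theorem stmt10 [Order.Frame L] (e : X → X → L) (hord : IsLOrder e) (hc : CompleteE e)
    (u : LFilter (scottOpens e)) (x s : X) (hs : IsSupE e (lowerOf e u) s) :
    (⨆ I : X → L, ⨆ _ : IsIdealE e I, ⨆ sI : X, ⨆ _ : IsSupE e I sI,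
      subL I (lowerOf e u) ⊓ e x sI) = e x s := by
  refine le_antisymm (iSup₂_le fun I _ => iSup₂_le fun sI hsI => ?_) ?_
  · calc subL I (lowerOf e u) ⊓ e x sI ≤ e x sI ⊓ e sI s :=
          le_inf inf_le_right (inf_le_left.trans (hsI.subL_le (hs.le hord)))
      _ ≤ e x s := hord.trans x sI s
  · calc e x s = subL (lowerOf e u) (lowerOf e u) ⊓ e x s := by rw [subL_self, top_inf_eq]
      _ ≤ _ := le_iSup₂_of_le (lowerOf e u) (isIdealE_lowerOf u hord hc) <|
          le_iSup₂ (f := fun sI (_ : IsSupE e (lowerOf e u) sI) =>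
            subL (lowerOf e u) (lowerOf e u) ⊓ e x sI) s hs
end

section
/- Let (X,e) be an L-continuous lattice with L-Scott topology σ_L(X) and r(u) = ⊔(u^l) for open filters u. Then for every A ∈ σ_L(X) and every x ∈ X, ⇓(⊓A)(x) ≤ sub(φ(A), r⁻(⇑x)), i.e. ⇓(⊓A)(x) ≤ ⨅_{u ∈ Φ_L(X)} (u(A) ⇨ ⇓(r(u))(x)). -/
variable {L : Type*} {X : Type*} {Y : Type*}

/-!
Since `⊓A` is a lower bound of `A`, `sub(A, ↑(⊓A)) = 1`, hence `u(A) ≤ u^l(⊓A) ≤ e(⊓A, r(u))`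
because `r(u)` is an upper bound of `u^l`. Transitivity of `e` makes `⇓` monotone in its first
argument, `e(a, b) ⊓ ⇓a(x) ≤ ⇓b(x)`, and the two facts combine to the claim.
-/

section LOrder

variable [Order.Frame L] {e : X → X → L}

theorem IsInfE.subL_upE_eq_top (hord : IsLOrder e) {A : X → L} {i : X} (hi : IsInfE e A i) :
    subL A (upE e i) = ⊤ := by
  simpa [subL, upE, hord.refl i] using (hi i).symm

theorem IsSupE.le_e (hord : IsLOrder e) {D : X → L} {s : X} (hs : IsSupE e D s) (z : X) :
    D z ≤ e z s := by
  have h : ⊤ ≤ D z ⇨ e z s := calc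
    ⊤ = e s s := (hord.refl s).symm
    _ = ⨅ y, D y ⇨ e y s := hs s
    _ ≤ D z ⇨ e z s := iInf_le _ z
  simpa using h

theorem toFun_inf_subL_le_lowerOf (u : LFilter (scottOpens e)) (A : ↥(scottOpens e)) (x : X) :
    u.toFun A ⊓ subL (A : X → L) (upE e x) ≤ lowerOf e u x :=
  le_iSup (fun B : ↥(scottOpens e) => u.toFun B ⊓ subL (B : X → L) (upE e x)) A

theorem IsLOrder.inf_wbelowE_le (hord : IsLOrder e) (x x' y : X) :
    e x x' ⊓ wbelowE e x y ≤ wbelowE e x' y := by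
  refine le_iInf fun I => le_iInf fun hI => le_iInf fun s => le_iInf fun hs => le_himp_iff.2 ?_
  have hw : wbelowE e x y ≤ e x s ⇨ I y :=
    (iInf_le _ I).trans <| (iInf_le _ hI).trans <| (iInf_le _ s).trans (iInf_le _ hs)
  calc e x x' ⊓ wbelowE e x y ⊓ e x' s
      ≤ (e x x' ⊓ e x' s) ⊓ (e x s ⇨ I y) := by
        rw [inf_right_comm]
        exact inf_le_inf_left _ hw
    _ ≤ e x s ⊓ (e x s ⇨ I y) := inf_le_inf_right _ (hord.trans _ _ _)
    _ ≤ I y := inf_himp_le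

end LOrder

theorem stmt13_general [Order.Frame L] (e : X → X → L) (hord : IsLOrder e)
    (A : ↥(scottOpens e)) (x iA : X) (hiA : IsInfE e (A : X → L) iA) :
    wbelowE e iA x ≤ ⨅ u : LFilter (scottOpens e), ⨅ ru : X,
      ⨅ _ : IsSupE e (lowerOf e u) ru, u.toFun A ⇨ wbelowE e ru x := by
  refine le_iInf fun u => le_iInf fun ru => le_iInf fun hru => le_himp_iff.2 ?_
  have hA : u.toFun A ≤ e iA ru := calc
    u.toFun A = u.toFun A ⊓ subL (A : X → L) (upE e iA) := by
      rw [hiA.subL_upE_eq_top hord, inf_top_eq]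
    _ ≤ lowerOf e u iA := toFun_inf_subL_le_lowerOf u A iA
    _ ≤ e iA ru := hru.le_e hord iA
  calc wbelowE e iA x ⊓ u.toFun A ≤ e iA ru ⊓ wbelowE e iA x := by
        rw [inf_comm]; exact inf_le_inf_right _ hA
    _ ≤ wbelowE e ru x := hord.inf_wbelowE_le iA ru x

/-- For an `L`-continuous lattice `(X, e)`, every `A ∈ σ_L(X)` and
`x ∈ X`: `⇓(⊓A)(x) ≤ sub(φ(A), r⁻(⇑x))`, i.e.
`⇓(⊓A)(x) ≤ ⨅_u (u(A) ⇨ ⇓(r(u))(x))`, where `r(u) = ⊔(u^l)`. -/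
theorem stmt13 [Order.Frame L] (e : X → X → L) (hord : IsLOrder e) (hc : CompleteE e)
    (hcont : ∀ x, IsSupE e (fun y => wbelowE e x y) x)
    (A : ↥(scottOpens e)) (x iA : X) (hiA : IsInfE e (A : X → L) iA) :
    wbelowE e iA x ≤ ⨅ u : LFilter (scottOpens e), ⨅ ru : X,
      ⨅ _ : IsSupE e (lowerOf e u) ru, u.toFun A ⇨ wbelowE e ru x :=
  stmt13_general e hord A x iA hiA
end
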